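/- arXiv:2408.12621 — 3 statements merged into one kernel-verified Lean document; each statement's English description precedes it below -/
import Mathlib

section
/- Let U : ℝ^d → ℝ be Lipschitz continuous, let a ≠ b be points of ℝ^d, and for β > 0 define I_β[φ] = (1/β)·log(∫₀¹ exp(β·U(φ(s)))·‖φ'(s)‖ ds) and I_∞[φ] = max_{s∈[0,1]} U(φ(s)) on continuously differentiable paths φ : [0,1] → ℝ^d with φ(0)=a, φ(1)=b. Let X be the set of such paths that in addition have constant speed, i.e. ‖φ'(s)‖ = L_φ > 0 for all s. Then for every sequence β_n → ∞ the functionals I_{β_n} Γ-converge to I_∞ on X in the following sense: (i) (liminf inequality) for every φ ∈ X and every sequence of continuously differentiable paths φ_n from a to b with sup_{s}‖φ_n(s) − φ(s)‖ + ∫₀¹‖φ_n'(s) − φ'(s)‖ ds → 0, one has liminf_{n→∞} I_{β_n}[φ_n] ≥ I_∞[φ]; and (ii) (recovery sequence) for every φ ∈ X the constant sequence φ_n = φ satisfies lim_{n→∞} I_{β_n}[φ] = I_∞[φ]. -/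
open Set Filter MeasureTheory

namespace MaxFluxAux

lemma contOn_of_hasDerivAt {d : ℕ} {ψ ψ' : ℝ → EuclideanSpace ℝ (Fin d)}
    (h : ∀ s ∈ Icc (0:ℝ) 1, HasDerivAt ψ (ψ' s) s) :
    ContinuousOn ψ (Icc 0 1) := fun s hs => (h s hs).continuousAt.continuousWithinAt

lemma intervalIntegrable_sub {f : ℝ → ℝ} (hf : ContinuousOn f (Icc 0 1))
    {c e : ℝ} (hc : 0 ≤ c) (hce : c ≤ e) (he : e ≤ 1) :
    IntervalIntegrable f MeasureTheory.volume c e :=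
  (hf.mono (by rw [uIcc_of_le hce]; exact Icc_subset_Icc hc he)).intervalIntegrable

lemma integral_sub_le {f : ℝ → ℝ} (hf : ContinuousOn f (Icc 0 1))
    (h0 : ∀ s ∈ Icc (0:ℝ) 1, 0 ≤ f s)
    {c e : ℝ} (hc : 0 ≤ c) (hce : c ≤ e) (he : e ≤ 1) :
    (∫ s in c..e, f s) ≤ ∫ s in (0:ℝ)..1, f s := by
  have hce1 : (0:ℝ) ≤ e := le_trans hc hce
  have h01 : c ≤ 1 := le_trans hce he
  have i1 : IntervalIntegrable f volume 0 c := intervalIntegrable_sub hf le_rfl hc h01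
  have i2 : IntervalIntegrable f volume c e := intervalIntegrable_sub hf hc hce he
  have i3 : IntervalIntegrable f volume e 1 := intervalIntegrable_sub hf hce1 he le_rfl
  have e1 := intervalIntegral.integral_add_adjacent_intervals i1 i2
  have e2 := intervalIntegral.integral_add_adjacent_intervals (i1.trans i2) i3
  have n1 : 0 ≤ ∫ s in (0:ℝ)..c, f s :=
    intervalIntegral.integral_nonneg hc (fun u hu => h0 u ⟨hu.1, le_trans hu.2 h01⟩)
  have n3 : 0 ≤ ∫ s in e..1, f s :=
    intervalIntegral.integral_nonneg he (fun u hu => h0 u ⟨le_trans hce1 hu.1, hu.2⟩)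
  linarith

lemma exists_max {d : ℕ} (U : EuclideanSpace ℝ (Fin d) → ℝ) (hUc : Continuous U)
    {φ : ℝ → EuclideanSpace ℝ (Fin d)} (hφc : ContinuousOn φ (Icc 0 1)) :
    ∃ s₀ ∈ Icc (0:ℝ) 1, (⨆ s : Icc (0:ℝ) 1, U (φ s)) = U (φ s₀) ∧
      ∀ t ∈ Icc (0:ℝ) 1, U (φ t) ≤ U (φ s₀) := by
  obtain ⟨s₀, hs₀, hmax⟩ := isCompact_Icc.exists_isMaxOn (nonempty_Icc.2 zero_le_one)
      (hUc.comp_continuousOn hφc)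
  refine ⟨s₀, hs₀, ?_, fun t ht => hmax ht⟩
  apply le_antisymm
  · exact ciSup_le fun t => hmax t.2
  · exact le_ciSup ⟨U (φ s₀), by rintro x ⟨t, rfl⟩; exact hmax t.2⟩ (⟨s₀, hs₀⟩ : Icc (0:ℝ) 1)

lemma exists_plateau {d : ℕ} (U : EuclideanSpace ℝ (Fin d) → ℝ) (hUc : Continuous U)
    {φ : ℝ → EuclideanSpace ℝ (Fin d)} (hφc : ContinuousOn φ (Icc 0 1))
    {ε : ℝ} (hε : 0 < ε) :
    ∃ c e : ℝ, 0 ≤ c ∧ c ≤ e ∧ e ≤ 1 ∧ 0 < e - c ∧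
      ∀ t ∈ Icc c e, (⨆ s : Icc (0:ℝ) 1, U (φ s)) - ε ≤ U (φ t) := by
  obtain ⟨s₀, hs₀, hMeq, hmax⟩ := exists_max U hUc hφc
  have hcw : ContinuousWithinAt (fun t => U (φ t)) (Icc 0 1) s₀ :=
    (hUc.comp_continuousOn hφc) s₀ hs₀
  rw [Metric.continuousWithinAt_iff] at hcw
  obtain ⟨δ, hδ, hδ'⟩ := hcw ε hε
  set δ₂ := min (δ/2) (1/2) with hδ₂def
  have hδ₂ : 0 < δ₂ := lt_min (by linarith) (by norm_num)
  have hδ₂δ : δ₂ < δ := lt_of_le_of_lt (min_le_left _ _) (by linarith)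
  obtain ⟨hs₀0, hs₀1⟩ := hs₀
  refine ⟨max 0 (s₀ - δ₂), min 1 (s₀ + δ₂), le_max_left _ _,
    le_trans (max_le hs₀0 (by linarith)) (le_min hs₀1 (by linarith)), min_le_left _ _, ?_, ?_⟩
  · have hhalf : δ₂ ≤ 1/2 := min_le_right _ _
    rcases le_or_gt s₀ (1/2) with h | h
    · have he : min 1 (s₀ + δ₂) = s₀ + δ₂ := min_eq_right (by linarith)
      have hc : max 0 (s₀ - δ₂) ≤ s₀ := max_le hs₀0 (by linarith)
      rw [he]; linarith
    · have hc : max 0 (s₀ - δ₂) = s₀ - δ₂ := max_eq_right (by linarith)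
      have he : s₀ ≤ min 1 (s₀ + δ₂) := le_min hs₀1 (by linarith)
      rw [hc]; linarith
  · intro t ht
    have ht1 : t ∈ Icc (0:ℝ) 1 :=
      ⟨le_trans (le_max_left _ _) ht.1, le_trans ht.2 (min_le_left _ _)⟩
    have hdist : dist t s₀ < δ := by
      rw [Real.dist_eq, abs_lt]
      constructor
      · have := le_trans (le_max_right _ _) ht.1; linarith
      · have := le_trans ht.2 (min_le_right _ _); linarith
    have := hδ' ht1 hdist
    rw [Real.dist_eq, abs_lt] at this
    rw [hMeq]; linarith [this.1]

lemma integral_norm_eq {d : ℕ} {ψ' : ℝ → EuclideanSpace ℝ (Fin d)} {L c e : ℝ}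
    (hc : 0 ≤ c) (hce : c ≤ e) (he : e ≤ 1)
    (hspeed : ∀ s ∈ Icc (0:ℝ) 1, ‖ψ' s‖ = L) :
    (∫ s in c..e, ‖ψ' s‖) = (e - c) * L := by
  rw [intervalIntegral.integral_congr (g := fun _ => L)
    (fun s hs => hspeed s (Icc_subset_Icc hc he ((uIcc_of_le hce) ▸ hs)))]
  simp [smul_eq_mul]

lemma integral_ge {d : ℕ} {U : EuclideanSpace ℝ (Fin d) → ℝ} (hUc : Continuous U)
    {ψ ψ' : ℝ → EuclideanSpace ℝ (Fin d)}
    (hψc : ContinuousOn ψ (Icc 0 1)) (hψ'c : ContinuousOn ψ' (Icc 0 1))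
    {c e m r β : ℝ} (hc : 0 ≤ c) (hce : c ≤ e) (he : e ≤ 1)
    (hm : ∀ s ∈ Icc c e, m ≤ U (ψ s))
    (hr : r ≤ ∫ s in c..e, ‖ψ' s‖) (hβ : 0 < β) :
    r * Real.exp (β * m) ≤ ∫ s in (0:ℝ)..1, Real.exp (β * U (ψ s)) * ‖ψ' s‖ := by
  have hFc : ContinuousOn (fun s => Real.exp (β * U (ψ s)) * ‖ψ' s‖) (Icc 0 1) :=
    ((Real.continuous_exp.comp (continuous_const.mul hUc)).comp_continuousOn hψc).mul hψ'c.norm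
  have hF0 : ∀ s ∈ Icc (0:ℝ) 1, 0 ≤ Real.exp (β * U (ψ s)) * ‖ψ' s‖ :=
    fun s _ => mul_nonneg (Real.exp_pos _).le (norm_nonneg _)
  have step1 : (∫ s in c..e, Real.exp (β * U (ψ s)) * ‖ψ' s‖) ≤
      ∫ s in (0:ℝ)..1, Real.exp (β * U (ψ s)) * ‖ψ' s‖ :=
    integral_sub_le hFc hF0 hc hce he
  have hg : IntervalIntegrable (fun s => Real.exp (β * m) * ‖ψ' s‖) volume c e :=
    intervalIntegrable_sub (continuousOn_const.mul hψ'c.norm) hc hce he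
  have hF : IntervalIntegrable (fun s => Real.exp (β * U (ψ s)) * ‖ψ' s‖) volume c e :=
    intervalIntegrable_sub hFc hc hce he
  have step2 : (∫ s in c..e, Real.exp (β * m) * ‖ψ' s‖) ≤
      ∫ s in c..e, Real.exp (β * U (ψ s)) * ‖ψ' s‖ := by
    refine intervalIntegral.integral_mono_on hce hg hF (fun s hs => ?_)
    exact mul_le_mul_of_nonneg_right
      (Real.exp_le_exp.2 (mul_le_mul_of_nonneg_left (hm s hs) hβ.le)) (norm_nonneg _)
  have step3 : (∫ s in c..e, Real.exp (β * m) * ‖ψ' s‖) = Real.exp (β * m) * ∫ s in c..e, ‖ψ' s‖ :=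
    intervalIntegral.integral_const_mul _ _
  have : r * Real.exp (β * m) ≤ Real.exp (β * m) * ∫ s in c..e, ‖ψ' s‖ := by
    rw [mul_comm]
    exact mul_le_mul_of_nonneg_left hr (Real.exp_pos _).le
  linarith

lemma one_div_log_ge {I r m β : ℝ} (hr : 0 < r) (hβ : 0 < β)
    (h : r * Real.exp (β * m) ≤ I) :
    m + Real.log r * β⁻¹ ≤ (1 / β) * Real.log I := by
  have hI : 0 < I := lt_of_lt_of_le (by positivity) h
  have hlog : Real.log r + β * m ≤ Real.log I := by
    have := Real.log_le_log (by positivity) h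
    rwa [Real.log_mul hr.ne' (Real.exp_ne_zero _), Real.log_exp] at this
  have h2 := mul_le_mul_of_nonneg_left hlog (by positivity : (0:ℝ) ≤ 1/β)
  calc m + Real.log r * β⁻¹ = (1/β) * (Real.log r + β * m) := by field_simp; ring
    _ ≤ (1/β) * Real.log I := h2

lemma one_div_log_le {I C m β : ℝ} (hβ : 0 < β) (hI : 0 < I) (hC : 0 < C)
    (h : I ≤ C * Real.exp (β * m)) :
    (1 / β) * Real.log I ≤ m + Real.log C * β⁻¹ := by
  have hlog : Real.log I ≤ Real.log C + β * m := by
    have := Real.log_le_log hI h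
    rwa [Real.log_mul hC.ne' (Real.exp_ne_zero _), Real.log_exp] at this
  have h2 := mul_le_mul_of_nonneg_left hlog (by positivity : (0:ℝ) ≤ 1/β)
  calc (1/β) * Real.log I ≤ (1/β) * (Real.log C + β * m) := h2
    _ = m + Real.log C * β⁻¹ := by field_simp; ring

end MaxFluxAux

set_option maxHeartbeats 1000000 in
open MaxFluxAux in
/-- Γ-convergence of the max-flux functionals `I_{β_n}` to `I_∞ = max_s U∘φ`
on constant-speed `C¹` paths from `a` to `b`, for Lipschitz `U` and any
sequence `β_n → ∞`: (i) the liminf inequality along sequences of `C¹` paths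
from `a` to `b` converging in the norm `sup‖·‖ + ∫‖(·)'‖`, and
(ii) the constant recovery sequence. -/
theorem maxflux_gamma_convergence {d : ℕ}
    (U : EuclideanSpace ℝ (Fin d) → ℝ) (K : NNReal) (hU : LipschitzWith K U)
    (a b : EuclideanSpace ℝ (Fin d)) (hab : a ≠ b)
    (β : ℕ → ℝ) (hβpos : ∀ n, 0 < β n) (hβ : Tendsto β atTop atTop)
    -- the path φ, an element of the class X : C¹ from a to b with constant speed
    (φ φ' : ℝ → EuclideanSpace ℝ (Fin d))
    (hφ : ∀ s ∈ Icc (0:ℝ) 1, HasDerivAt φ (φ' s) s)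
    (hφ'c : ContinuousOn φ' (Icc 0 1))
    (hφ0 : φ 0 = a) (hφ1 : φ 1 = b)
    (L : ℝ) (hL : 0 < L) (hspeed : ∀ s ∈ Icc (0:ℝ) 1, ‖φ' s‖ = L) :
    -- (i) liminf inequality
    (∀ (φn φn' : ℕ → ℝ → EuclideanSpace ℝ (Fin d)),
      (∀ n, ∀ s ∈ Icc (0:ℝ) 1, HasDerivAt (φn n) (φn' n s) s) →
      (∀ n, ContinuousOn (φn' n) (Icc 0 1)) →
      (∀ n, φn n 0 = a) → (∀ n, φn n 1 = b) →
      Tendsto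
        (fun n => (⨆ s : Icc (0:ℝ) 1, ‖φn n s - φ s‖) +
          ∫ s in (0:ℝ)..1, ‖φn' n s - φ' s‖) atTop (nhds 0) →
      (⨆ s : Icc (0:ℝ) 1, U (φ s)) ≤
        liminf
          (fun n => (1 / β n) *
            Real.log (∫ s in (0:ℝ)..1, Real.exp (β n * U (φn n s)) * ‖φn' n s‖))
          atTop)
    ∧
    -- (ii) recovery sequence: the constant sequence φ
    Tendsto
      (fun n => (1 / β n) *
        Real.log (∫ s in (0:ℝ)..1, Real.exp (β n * U (φ s)) * ‖φ' s‖))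
      atTop (nhds (⨆ s : Icc (0:ℝ) 1, U (φ s))) := by
  have hUc := hU.continuous
  have hφc : ContinuousOn φ (Icc 0 1) := contOn_of_hasDerivAt hφ
  obtain ⟨s₀, hs₀, hMeq, hmaxU⟩ := exists_max U hUc hφc
  set M := ⨆ s : Icc (0:ℝ) 1, U (φ s) with hMdef
  have hMmax : ∀ t ∈ Icc (0:ℝ) 1, U (φ t) ≤ M := fun t ht => hMeq ▸ hmaxU t ht
  have hβinv : Tendsto (fun n => (β n)⁻¹) atTop (nhds 0) := hβ.inv_tendsto_atTop
  constructor
  · -- (i) liminf inequality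
    intro φn φn' hφn hφn'c hφn0 hφn1 hconv
    set f := fun n => (1 / β n) *
        Real.log (∫ s in (0:ℝ)..1, Real.exp (β n * U (φn n s)) * ‖φn' n s‖) with hfdef
    have hφnc : ∀ n, ContinuousOn (φn n) (Icc 0 1) := fun n => contOn_of_hasDerivAt (hφn n)
    set S := fun n => ⨆ s : Icc (0:ℝ) 1, ‖φn n s - φ s‖ with hSdef
    set T := fun n => ∫ s in (0:ℝ)..1, ‖φn' n s - φ' s‖ with hTdef
    have hd'c : ∀ n, ContinuousOn (fun s => ‖φn' n s - φ' s‖) (Icc 0 1) :=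
      fun n => ((hφn'c n).sub hφ'c).norm
    have hS_le : ∀ n, ∀ s ∈ Icc (0:ℝ) 1, ‖φn n s - φ s‖ ≤ S n := by
      intro n s hs
      have hb : BddAbove (Set.range (fun s : Icc (0:ℝ) 1 => ‖φn n s - φ s‖)) := by
        rw [← Set.image_eq_range (fun s => ‖φn n s - φ s‖) (Icc (0:ℝ) 1)]
        exact (isCompact_Icc.image_of_continuousOn (((hφnc n).sub hφc).norm)).bddAbove
      exact le_ciSup hb ⟨s, hs⟩
    have hS0 : ∀ n, 0 ≤ S n := fun n => Real.iSup_nonneg fun s => norm_nonneg _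
    have hT0 : ∀ n, 0 ≤ T n :=
      fun n => intervalIntegral.integral_nonneg zero_le_one (fun u _ => norm_nonneg _)
    have hsmall : ∀ η : ℝ, 0 < η → ∀ᶠ n in atTop, S n < η ∧ T n < η := by
      intro η hη
      filter_upwards [hconv.eventually (gt_mem_nhds hη)] with n hn
      exact ⟨by linarith [hT0 n], by linarith [hS0 n]⟩
    have hUdist : ∀ n, ∀ s ∈ Icc (0:ℝ) 1, |U (φn n s) - U (φ s)| ≤ (K : ℝ) * S n := by
      intro n s hs
      have h1 := hU.dist_le_mul (φn n s) (φ s)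
      rw [Real.dist_eq, dist_eq_norm] at h1
      exact le_trans h1 (mul_le_mul_of_nonneg_left (hS_le n s hs) K.coe_nonneg)
    have hFnc : ∀ n, ContinuousOn (fun s => Real.exp (β n * U (φn n s)) * ‖φn' n s‖) (Icc 0 1) :=
      fun n => ((Real.continuous_exp.comp (continuous_const.mul hUc)).comp_continuousOn
        (hφnc n)).mul (hφn'c n).norm
    have hTsub : ∀ n, (∫ s in (0:ℝ)..1, ‖φn' n s - φ' s‖) = T n := fun n => rfl
    -- length upper bound for cobound
    have hlen_ub : ∀ n, (∫ s in (0:ℝ)..1, ‖φn' n s‖) ≤ L + T n := by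
      intro n
      have i1 : IntervalIntegrable (fun s => ‖φn' n s‖) volume 0 1 :=
        intervalIntegrable_sub (hφn'c n).norm le_rfl zero_le_one le_rfl
      have i2 : IntervalIntegrable (fun s => ‖φ' s‖ + ‖φn' n s - φ' s‖) volume 0 1 :=
        intervalIntegrable_sub (hφ'c.norm.add (hd'c n)) le_rfl zero_le_one le_rfl
      have hmono := intervalIntegral.integral_mono_on zero_le_one i1 i2 (fun s _ => by
        have h := norm_sub_norm_le (φn' n s) (φ' s)
        have : ‖φn' n s‖ - ‖φ' s‖ ≤ ‖φn' n s - φ' s‖ := le_trans (by linarith [abs_nonneg (‖φn' n s‖ - ‖φ' s‖)]) h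
        linarith)
      have hadd : (∫ s in (0:ℝ)..1, (‖φ' s‖ + ‖φn' n s - φ' s‖)) =
          (∫ s in (0:ℝ)..1, ‖φ' s‖) + T n := by
        rw [intervalIntegral.integral_add
          (intervalIntegrable_sub hφ'c.norm le_rfl zero_le_one le_rfl)
          (intervalIntegrable_sub (hd'c n) le_rfl zero_le_one le_rfl)]
      have hLeq : (∫ s in (0:ℝ)..1, ‖φ' s‖) = L := by
        have := integral_norm_eq (le_refl (0:ℝ)) zero_le_one le_rfl hspeed
        simpa using this
      rw [hadd, hLeq] at hmono
      exact hmono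
    -- now the liminf bound
    refine le_of_forall_lt_imp_le_of_dense ?_
    intro x hx
    have hε : 0 < M - x := by linarith
    set ε := M - x with hεdef
    obtain ⟨c, e, hc, hce, he, hd, hpl⟩ := exists_plateau U hUc hφc (show 0 < ε/4 by linarith)
    rw [← hMdef] at hpl
    set r := L * (e - c) / 2 with hrdef
    have hr : 0 < r := by positivity
    have hlogr : Tendsto (fun n => Real.log r * (β n)⁻¹) atTop (nhds 0) := by
      simpa using hβinv.const_mul (Real.log r)
    have hKbnd : 0 < ε / (4 * ((K : ℝ) + 1)) := by positivity
    -- the key eventual lower bound on the integral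
    have hIlow : ∀ᶠ n in atTop,
        r * Real.exp (β n * (M - ε/2)) ≤
          ∫ s in (0:ℝ)..1, Real.exp (β n * U (φn n s)) * ‖φn' n s‖ := by
      filter_upwards [hsmall _ hKbnd, hsmall _ (show 0 < L * (e - c) / 2 by positivity)]
        with n hn1 hn2
      have hKS : (K : ℝ) * S n ≤ ε / 4 := by
        have h1 := hn1.1
        have h2 := (lt_div_iff₀ (by positivity : (0:ℝ) < 4 * ((K : ℝ) + 1))).1 h1
        nlinarith [hS0 n, K.coe_nonneg]
      have hm : ∀ t ∈ Icc c e, M - ε/2 ≤ U (φn n t) := by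
        intro t ht
        have ht1 : t ∈ Icc (0:ℝ) 1 := Icc_subset_Icc hc he ht
        have h1 := hpl t ht
        have h2 := (abs_le.1 (hUdist n t ht1)).1
        linarith
      have hlen : r ≤ ∫ s in c..e, ‖φn' n s‖ := by
        have i1 : IntervalIntegrable (fun s => ‖φ' s‖ - ‖φn' n s - φ' s‖) volume c e :=
          intervalIntegrable_sub (hφ'c.norm.sub (hd'c n)) hc hce he
        have i2 : IntervalIntegrable (fun s => ‖φn' n s‖) volume c e :=
          intervalIntegrable_sub (hφn'c n).norm hc hce he
        have hmono := intervalIntegral.integral_mono_on hce i1 i2 (fun s _ => by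
          have h := norm_sub_norm_le (φ' s) (φn' n s)
          rw [norm_sub_rev] at h
          linarith)
        have hsubint : (∫ s in c..e, (‖φ' s‖ - ‖φn' n s - φ' s‖)) =
            (∫ s in c..e, ‖φ' s‖) - ∫ s in c..e, ‖φn' n s - φ' s‖ :=
          intervalIntegral.integral_sub
            (intervalIntegrable_sub hφ'c.norm hc hce he)
            (intervalIntegrable_sub (hd'c n) hc hce he)
        have hLeq : (∫ s in c..e, ‖φ' s‖) = (e - c) * L := integral_norm_eq hc hce he hspeed
        have hTle : (∫ s in c..e, ‖φn' n s - φ' s‖) ≤ T n :=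
          integral_sub_le (hd'c n) (fun u _ => norm_nonneg _) hc hce he
        have h2 := hn2.2
        rw [hsubint, hLeq] at hmono
        rw [hrdef]
        linarith
      exact integral_ge hUc (hφnc n) (hφn'c n) hc hce he hm hlen (hβpos n)
    have hmain : ∀ᶠ n in atTop, x ≤ f n := by
      filter_upwards [hIlow,
        hlogr.eventually (eventually_gt_nhds (show -(ε/4) < 0 by linarith))] with n h1 h2
      have h3 := one_div_log_ge hr (hβpos n) h1
      have : M - ε/2 + Real.log r * (β n)⁻¹ ≤ f n := h3
      linarith
    -- cobounded above
    have hcob : ∀ᶠ n in atTop, f n ≤ M + 1 + Real.log (L + 1) := by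
      filter_upwards [hIlow, hsmall _ (show (0:ℝ) < 1/((K:ℝ)+1) by positivity),
        hβ.eventually_ge_atTop 1] with n h1 hn hβ1
      have hβn := hβpos n
      have hKS : (K : ℝ) * S n ≤ 1 := by
        have h2 := (lt_div_iff₀ (by positivity : (0:ℝ) < (K : ℝ) + 1)).1 hn.1
        nlinarith [hS0 n, K.coe_nonneg]
      have hIpos : 0 < ∫ s in (0:ℝ)..1, Real.exp (β n * U (φn n s)) * ‖φn' n s‖ :=
        lt_of_lt_of_le (by positivity) h1
      have hub : (∫ s in (0:ℝ)..1, Real.exp (β n * U (φn n s)) * ‖φn' n s‖) ≤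
          (L + 1) * Real.exp (β n * (M + 1)) := by
        have i1 : IntervalIntegrable (fun s => Real.exp (β n * U (φn n s)) * ‖φn' n s‖) volume 0 1 :=
          intervalIntegrable_sub (hFnc n) le_rfl zero_le_one le_rfl
        have i2 : IntervalIntegrable (fun s => Real.exp (β n * (M + 1)) * ‖φn' n s‖) volume 0 1 :=
          intervalIntegrable_sub (continuousOn_const.mul (hφn'c n).norm) le_rfl zero_le_one le_rfl
        have hmono := intervalIntegral.integral_mono_on zero_le_one i1 i2 (fun s hs => by
          have h2 := (abs_le.1 (hUdist n s hs)).2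
          have hUb : U (φn n s) ≤ M + 1 := by
            have := hMmax s hs; linarith
          exact mul_le_mul_of_nonneg_right
            (Real.exp_le_exp.2 (mul_le_mul_of_nonneg_left hUb (hβpos n).le)) (norm_nonneg _))
        have hcm : (∫ s in (0:ℝ)..1, Real.exp (β n * (M + 1)) * ‖φn' n s‖) =
            Real.exp (β n * (M + 1)) * ∫ s in (0:ℝ)..1, ‖φn' n s‖ :=
          intervalIntegral.integral_const_mul _ _
        have hT1 : T n < 1 := lt_of_lt_of_le hn.2 (by
          rw [div_le_one (by positivity : (0:ℝ) < (K:ℝ) + 1)]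
          linarith [K.coe_nonneg])
        have : (∫ s in (0:ℝ)..1, ‖φn' n s‖) ≤ L + 1 := le_trans (hlen_ub n) (by linarith)
        calc (∫ s in (0:ℝ)..1, Real.exp (β n * U (φn n s)) * ‖φn' n s‖)
            ≤ Real.exp (β n * (M + 1)) * ∫ s in (0:ℝ)..1, ‖φn' n s‖ := by rw [← hcm]; exact hmono
          _ ≤ Real.exp (β n * (M + 1)) * (L + 1) := by
              exact mul_le_mul_of_nonneg_left this (Real.exp_pos _).le
          _ = (L + 1) * Real.exp (β n * (M + 1)) := mul_comm _ _
      have h3 := one_div_log_le (hβpos n) hIpos (by linarith : (0:ℝ) < L + 1) hub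
      have hlogL1 : 0 ≤ Real.log (L + 1) := Real.log_nonneg (by linarith)
      have hinv1 : (β n)⁻¹ ≤ 1 := by
        rw [inv_le_one_iff₀]; right; exact hβ1
      have : Real.log (L + 1) * (β n)⁻¹ ≤ Real.log (L + 1) := by
        nlinarith [inv_nonneg.2 hβn.le]
      calc f n ≤ M + 1 + Real.log (L + 1) * (β n)⁻¹ := h3
        _ ≤ M + 1 + Real.log (L + 1) := by linarith
    exact le_liminf_of_le (isCoboundedUnder_ge_of_eventually_le atTop hcob) hmain
  · -- (ii) recovery sequence
    rw [tendsto_order]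
    constructor
    · intro x hx
      have hε : 0 < M - x := by linarith
      obtain ⟨c, e, hc, hce, he, hd, hpl⟩ := exists_plateau U hUc hφc (show 0 < (M - x)/2 by linarith)
      rw [← hMdef] at hpl
      set r := (e - c) * L with hrdef
      have hr : 0 < r := mul_pos hd hL
      have hint : ∀ n, r * Real.exp (β n * (M - (M - x)/2)) ≤
          ∫ s in (0:ℝ)..1, Real.exp (β n * U (φ s)) * ‖φ' s‖ := fun n =>
        integral_ge hUc hφc hφ'c hc hce he hpl
          (le_of_eq (integral_norm_eq hc hce he hspeed).symm) (hβpos n)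
      have hf : ∀ n, M - (M - x)/2 + Real.log r * (β n)⁻¹ ≤
          (1 / β n) * Real.log (∫ s in (0:ℝ)..1, Real.exp (β n * U (φ s)) * ‖φ' s‖) := fun n =>
        one_div_log_ge hr (hβpos n) (hint n)
      have hlogr : Tendsto (fun n => Real.log r * (β n)⁻¹) atTop (nhds 0) := by
        simpa using hβinv.const_mul (Real.log r)
      filter_upwards [hlogr.eventually (eventually_gt_nhds (show -((M - x)/2) < 0 by linarith))]
        with n hn
      have := hf n
      linarith
    · intro x hx
      obtain ⟨c, e, hc, hce, he, hd, hpl⟩ := exists_plateau U hUc hφc one_pos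
      rw [← hMdef] at hpl
      set r := (e - c) * L with hrdef
      have hr : 0 < r := mul_pos hd hL
      have hIpos : ∀ n, 0 < ∫ s in (0:ℝ)..1, Real.exp (β n * U (φ s)) * ‖φ' s‖ := fun n =>
        lt_of_lt_of_le (by positivity) (integral_ge hUc hφc hφ'c hc hce he hpl
          (le_of_eq (integral_norm_eq hc hce he hspeed).symm) (hβpos n))
      have hub : ∀ n, (∫ s in (0:ℝ)..1, Real.exp (β n * U (φ s)) * ‖φ' s‖) ≤
          L * Real.exp (β n * M) := by
        intro n
        have hFc : ContinuousOn (fun s => Real.exp (β n * U (φ s)) * ‖φ' s‖) (Icc 0 1) :=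
          ((Real.continuous_exp.comp (continuous_const.mul hUc)).comp_continuousOn hφc).mul hφ'c.norm
        have i1 : IntervalIntegrable (fun s => Real.exp (β n * U (φ s)) * ‖φ' s‖) volume 0 1 :=
          intervalIntegrable_sub hFc le_rfl zero_le_one le_rfl
        have i2 : IntervalIntegrable (fun s => Real.exp (β n * M) * ‖φ' s‖) volume 0 1 :=
          intervalIntegrable_sub (continuousOn_const.mul hφ'c.norm) le_rfl zero_le_one le_rfl
        have hmono := intervalIntegral.integral_mono_on zero_le_one i1 i2 (fun s hs =>
          mul_le_mul_of_nonneg_right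
            (Real.exp_le_exp.2 (mul_le_mul_of_nonneg_left (hMmax s hs) (hβpos n).le))
            (norm_nonneg _))
        have hcm : (∫ s in (0:ℝ)..1, Real.exp (β n * M) * ‖φ' s‖) =
            Real.exp (β n * M) * ∫ s in (0:ℝ)..1, ‖φ' s‖ :=
          intervalIntegral.integral_const_mul _ _
        have hLeq : (∫ s in (0:ℝ)..1, ‖φ' s‖) = L := by
          have := integral_norm_eq (le_refl (0:ℝ)) zero_le_one le_rfl hspeed
          simpa using this
        rw [hcm, hLeq, mul_comm] at hmono
        exact hmono
      have hf : ∀ n, (1 / β n) * Real.log (∫ s in (0:ℝ)..1, Real.exp (β n * U (φ s)) * ‖φ' s‖) ≤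
          M + Real.log L * (β n)⁻¹ := fun n =>
        one_div_log_le (hβpos n) (hIpos n) hL (hub n)
      have hlogL : Tendsto (fun n => M + Real.log L * (β n)⁻¹) atTop (nhds M) := by
        have h1 : Tendsto (fun n => Real.log L * (β n)⁻¹) atTop (nhds 0) := by
          simpa using hβinv.const_mul (Real.log L)
        simpa using tendsto_const_nhds.add h1
      filter_upwards [hlogL.eventually (eventually_lt_nhds hx)] with n hn
      exact lt_of_le_of_lt (hf n) hn
end

section
/- Value of the geometric action on an uphill–downhill path through a saddle: let U : ℝ^d → ℝ be continuously differentiable, let φ : [0,1] → ℝ^d be continuously differentiable, and suppose there is s* ∈ [0,1] such that ⟨∇U(φ(s)), φ'(s)⟩ = ‖∇U(φ(s))‖·‖φ'(s)‖ for all s ∈ [0, s*] (uphill part) and ⟨∇U(φ(s)), φ'(s)⟩ = −‖∇U(φ(s))‖·‖φ'(s)‖ for all s ∈ [s*, 1] (downhill part). Then I_g[φ] = ∫₀¹ ‖∇U(φ(s))‖·‖φ'(s)‖ ds = 2·U(φ(s*)) − U(φ(0)) − U(φ(1)). In particular, if φ(0) and φ(1) have the same potential value U₀ and φ(s*) is the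 saddle, the action equals twice the energy barrier 2(U(φ(s*)) − U₀). -/
open Set Filter MeasureTheory
open scoped RealInnerProductSpace

/-! On the uphill part the integrand is the derivative `⟪∇U(φ), φ'⟫` of `U ∘ φ`, on the downhill
part it is minus that derivative, so the fundamental theorem of calculus on `[0, s⋆]` and
`[s⋆, 1]` gives `(U(φ s⋆) - U(φ 0)) + (U(φ s⋆) - U(φ 1))`. -/

theorem HasGradientAt.comp_hasDerivAt {F : Type*} [NormedAddCommGroup F]
    [InnerProductSpace ℝ F] [CompleteSpace F] {U : F → ℝ} {g : F} {φ : ℝ → F} {v : F} {s : ℝ}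
    (hU : HasGradientAt U g (φ s)) (hφ : HasDerivAt φ v s) :
    HasDerivAt (fun t => U (φ t)) ⟪g, v⟫ s :=
  hU.hasFDerivAt.comp_hasDerivAt s hφ

theorem intervalIntegral.integral_eq_sub_of_hasDerivAt_of_eqOn {f f' g : ℝ → ℝ} {a b : ℝ}
    (hab : a ≤ b) (hf : ∀ s ∈ Icc a b, HasDerivAt f (f' s) s) (hg : ContinuousOn g (Icc a b))
    (hgf : EqOn g f' (Icc a b)) :
    ∫ s in a..b, g s = f b - f a := by
  rw [← uIcc_of_le hab] at hf hg hgf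
  rw [intervalIntegral.integral_congr hgf]
  exact intervalIntegral.integral_eq_sub_of_hasDerivAt hf
    ((hg.congr hgf.symm).intervalIntegrable)

/-- Value of the geometric action on an uphill–downhill path through a saddle:
if the gradient is positively aligned with the tangent on `[0,s⋆]` and
anti-aligned on `[s⋆,1]`, then
`I_g[φ] = ∫₀¹ ‖∇U(φ)‖‖φ'‖ ds = 2·U(φ(s⋆)) − U(φ(0)) − U(φ(1))`. -/
theorem scalar_work_uphill_downhill {d : ℕ}
    (U : EuclideanSpace ℝ (Fin d) → ℝ)
    (gradU : EuclideanSpace ℝ (Fin d) → EuclideanSpace ℝ (Fin d))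
    (hgrad : ∀ x, HasGradientAt U (gradU x) x)
    (hgradc : Continuous gradU)
    (φ φ' : ℝ → EuclideanSpace ℝ (Fin d))
    (hφ : ∀ s ∈ Icc (0:ℝ) 1, HasDerivAt φ (φ' s) s)
    (hφ'c : ContinuousOn φ' (Icc 0 1))
    (sstar : ℝ) (hsstar : sstar ∈ Icc (0:ℝ) 1)
    (hup : ∀ s ∈ Icc (0:ℝ) sstar, ⟪gradU (φ s), φ' s⟫ = ‖gradU (φ s)‖ * ‖φ' s‖)
    (hdown : ∀ s ∈ Icc sstar (1:ℝ), ⟪gradU (φ s), φ' s⟫ = -(‖gradU (φ s)‖ * ‖φ' s‖)) :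
    (∫ s in (0:ℝ)..1, ‖gradU (φ s)‖ * ‖φ' s‖) =
      2 * U (φ sstar) - U (φ 0) - U (φ 1) := by
  obtain ⟨hs0, hs1⟩ := hsstar
  have hleft : Icc 0 sstar ⊆ Icc (0:ℝ) 1 := Icc_subset_Icc le_rfl hs1
  have hright : Icc sstar 1 ⊆ Icc (0:ℝ) 1 := Icc_subset_Icc hs0 le_rfl
  have hderiv : ∀ s ∈ Icc (0:ℝ) 1, HasDerivAt (fun t => U (φ t)) ⟪gradU (φ s), φ' s⟫ s :=
    fun s hs => (hgrad (φ s)).comp_hasDerivAt (hφ s hs)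
  have hcont : ContinuousOn (fun s => ‖gradU (φ s)‖ * ‖φ' s‖) (Icc 0 1) :=
    (hgradc.comp_continuousOn (HasDerivAt.continuousOn hφ)).norm.mul hφ'c.norm
  have huphill : ∫ s in (0:ℝ)..sstar, ‖gradU (φ s)‖ * ‖φ' s‖ = U (φ sstar) - U (φ 0) :=
    intervalIntegral.integral_eq_sub_of_hasDerivAt_of_eqOn hs0
      (fun s hs => hderiv s (hleft hs)) (hcont.mono hleft) fun s hs => (hup s hs).symm
  have hdownhill : ∫ s in sstar..(1:ℝ), ‖gradU (φ s)‖ * ‖φ' s‖ = U (φ sstar) - U (φ 1) := by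
    rw [intervalIntegral.integral_eq_sub_of_hasDerivAt_of_eqOn (f := fun t => -U (φ t)) hs1
      (fun s hs => (hderiv s (hright hs)).neg) (hcont.mono hright)
      fun s hs => by simp only [hdown s hs, neg_neg]]
    ring
  rw [← intervalIntegral.integral_add_adjacent_intervals
      ((hcont.mono hleft).intervalIntegrable_of_Icc hs0)
      ((hcont.mono hright).intervalIntegrable_of_Icc hs1),
    huphill, hdownhill]
  ring
end

section
/- The Euler–Lagrange equation implies stationarity of the line-integral functional: let F : ℝ^d → ℝ be continuously differentiable, let r : [0,1] → ℝ^d be twice continuously differentiable with r'(t) ≠ 0 for all t, and set τ(t) = r'(t)/‖r'(t)‖. Suppose r satisfies the Euler–Lagrange equation ∇F(r(t))·‖r'(t)‖ = ⟨∇F(r(t)), r'(t)⟩·τ(t) + F(r(t))·τ'(t) for all t ∈ [0,1]. Then for every continuously differentiable variation δr : [0,1] → ℝ^d with δr(0) = δr(1) = 0, the derivative at ε = 0 of ε ↦ ∫₀¹ F(r(t) + ε·δr(t))·‖r'(t) + ε·δr'(t)‖ dt is zero. -/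
open Set Filter MeasureTheory Metric Function
open scoped RealInnerProductSpace Topology

/-!
Differentiating under the integral sign, which is legitimate because the `ε`-derivative of the
integrand is jointly continuous on a compact box `[-δ, δ] × [0, 1]` on which `r' + ε δr'` does not
vanish, the derivative at `ε = 0` is `∫₀¹ (⟪∇F(r), δr⟫ ‖r'‖ + F(r) ⟪τ, δr'⟫) dt`. Paired with `δr`,
the Euler–Lagrange equation says that this integrand is the derivative of `F(r) ⟪τ, δr⟫`, so the
integral is a boundary term, which vanishes because `δr(0) = δr(1) = 0`.
-/

theorem intervalIntegral.hasDerivAt_integral_of_continuousOn_uncurry {E : Type*}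
    [NormedAddCommGroup E] [NormedSpace ℝ E] {L L' : ℝ → ℝ → E} {x₀ δ a b : ℝ} (hδ : 0 < δ)
    (hL : ContinuousOn (uncurry L) (closedBall x₀ δ ×ˢ uIcc a b))
    (hL' : ContinuousOn (uncurry L') (closedBall x₀ δ ×ˢ uIcc a b))
    (hderiv : ∀ x ∈ ball x₀ δ, ∀ t ∈ uIcc a b, HasDerivAt (L · t) (L' x t) x) :
    HasDerivAt (fun x => ∫ t in a..b, L x t) (∫ t in a..b, L' x₀ t) x₀ := by
  have hx₀ : x₀ ∈ closedBall x₀ δ := mem_closedBall_self hδ.le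
  obtain ⟨C, hC⟩ :=
    ((isCompact_closedBall x₀ δ).prod isCompact_uIcc).exists_bound_of_continuousOn hL'
  refine (intervalIntegral.hasDerivAt_integral_of_dominated_loc_of_deriv_le
    (bound := fun _ => C) (ball_mem_nhds x₀ hδ) ?_ (hL.uncurry_left x₀ hx₀).intervalIntegrable
    (((hL'.uncurry_left x₀ hx₀).mono uIoc_subset_uIcc).aestronglyMeasurable measurableSet_uIoc)
    (Eventually.of_forall fun t ht x hx =>
      hC (x, t) ⟨ball_subset_closedBall hx, uIoc_subset_uIcc ht⟩)
    intervalIntegrable_const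
    (Eventually.of_forall fun t ht x hx => hderiv x hx t (uIoc_subset_uIcc ht))).2
  filter_upwards [ball_mem_nhds x₀ hδ] with x hx
  exact ((hL.uncurry_left x (ball_subset_closedBall hx)).mono uIoc_subset_uIcc).aestronglyMeasurable
    measurableSet_uIoc

section InnerProductSpace

variable {E : Type*} [NormedAddCommGroup E] [InnerProductSpace ℝ E]

theorem HasDerivAt.norm {f : ℝ → E} {f' : E} {x : ℝ} (hf : HasDerivAt f f' x) (hx : f x ≠ 0) :
    HasDerivAt (fun t => ‖f t‖) (⟪f x, f'⟫ / ‖f x‖) x := by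
  have h := hf.norm_sq.sqrt (pow_ne_zero 2 (norm_ne_zero_iff.2 hx))
  simp only [Real.sqrt_sq (norm_nonneg _)] at h
  convert h using 1
  rw [mul_div_mul_left _ _ two_ne_zero]

noncomputable def mulNormLineDeriv (F : E → ℝ) (g : E → E) (x v y w : E) (ε : ℝ) : ℝ :=
  ⟪g (x + ε • v), v⟫ * ‖y + ε • w‖ + F (x + ε • v) * (⟪y + ε • w, w⟫ / ‖y + ε • w‖)

theorem hasDerivAt_mul_norm_add_smul [CompleteSpace E] {F : E → ℝ} {g : E → E} {x v y w : E}
    {ε : ℝ} (hF : HasGradientAt F (g (x + ε • v)) (x + ε • v)) (hy : y + ε • w ≠ 0) :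
    HasDerivAt (fun s : ℝ => F (x + s • v) * ‖y + s • w‖) (mulNormLineDeriv F g x v y w ε) ε := by
  have hline : ∀ a b : E, HasDerivAt (fun s : ℝ => a + s • b) b ε := fun a b => by
    simpa using ((hasDerivAt_id ε).smul_const b).const_add a
  have hFline : HasDerivAt (fun s : ℝ => F (x + s • v)) ⟪g (x + ε • v), v⟫ ε := by
    simpa [Function.comp_def] using hF.hasFDerivAt.comp_hasDerivAt ε (hline x v)
  exact hFline.mul ((hline y w).norm hy)

theorem hasDerivAt_mul_inner_unitTangent_of_eulerLagrange [CompleteSpace E] {F : E → ℝ}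
    {g : E → E} {r r' δr : ℝ → E} {τ' δr' : E} {t : ℝ}
    (hF : HasGradientAt F (g (r t)) (r t)) (hr : HasDerivAt r (r' t) t)
    (hτ : HasDerivAt (fun u => ‖r' u‖⁻¹ • r' u) τ' t) (hδr : HasDerivAt δr δr' t)
    (hEL : ‖r' t‖ • g (r t) = ⟪g (r t), r' t⟫ • (‖r' t‖⁻¹ • r' t) + F (r t) • τ') :
    HasDerivAt (fun u => F (r u) * ⟪‖r' u‖⁻¹ • r' u, δr u⟫)
      (mulNormLineDeriv F g (r t) (δr t) (r' t) δr' 0) t := by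
  have hFr : HasDerivAt (fun u => F (r u)) ⟪g (r t), r' t⟫ t := by
    simpa [Function.comp_def] using hF.hasFDerivAt.comp_hasDerivAt t hr
  have hELδr : ‖r' t‖ * ⟪g (r t), δr t⟫ =
      ⟪g (r t), r' t⟫ * (‖r' t‖⁻¹ * ⟪r' t, δr t⟫) + F (r t) * ⟪τ', δr t⟫ := by
    simpa only [inner_add_left, real_inner_smul_left] using congrArg (⟪·, δr t⟫) hEL
  refine (hFr.mul (hτ.inner ℝ hδr)).congr_deriv ?_
  simp only [mulNormLineDeriv, zero_smul, add_zero, real_inner_smul_left, div_eq_inv_mul]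
  linarith

section ContinuousOn

variable {X : Type*} [TopologicalSpace X] {K : Set X} {x v y w : X → E}

theorem ContinuousOn.uncurry_add_smul (hx : ContinuousOn x K) (hv : ContinuousOn v K)
    (s : Set ℝ) : ContinuousOn (uncurry fun ε t => x t + ε • v t) (s ×ˢ K) :=
  (hx.comp continuousOn_snd fun _ hp => hp.2).add
    (continuousOn_fst.smul (hv.comp continuousOn_snd fun _ hp => hp.2))

theorem IsCompact.eventually_forall_add_smul_ne_zero (hK : IsCompact K) (hy : ContinuousOn y K)
    (hw : ContinuousOn w K) (hy0 : ∀ t ∈ K, y t ≠ 0) :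
    ∀ᶠ ε in 𝓝 (0:ℝ), ∀ t ∈ K, y t + ε • w t ≠ 0 := by
  suffices ∀ᶠ ε in 𝓝 (0:ℝ), ∀ t ∈ K, t ∈ K → y t + ε • w t ≠ 0 from
    this.mono fun ε h t ht => h t ht ht
  refine hK.eventually_forall_of_forall_eventually fun t ht => ?_
  have h0 : y t + (0:ℝ) • w t ≠ 0 := by simpa using hy0 t ht
  have hne := ((hy.uncurry_add_smul hw univ).continuousWithinAt
    (show ((0:ℝ), t) ∈ univ ×ˢ K from ⟨mem_univ _, ht⟩)).eventually_ne h0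
  rw [eventually_nhdsWithin_iff] at hne
  exact hne.mono fun p hp hpK => hp ⟨mem_univ _, hpK⟩

variable {F : E → ℝ} {s : Set ℝ}

theorem continuousOn_mul_norm_add_smul (hF : Continuous F) (hx : ContinuousOn x K)
    (hv : ContinuousOn v K) (hy : ContinuousOn y K) (hw : ContinuousOn w K) :
    ContinuousOn (uncurry fun ε t => F (x t + ε • v t) * ‖y t + ε • w t‖) (s ×ˢ K) :=
  (hF.comp_continuousOn (hx.uncurry_add_smul hv s)).mul (hy.uncurry_add_smul hw s).norm

theorem continuousOn_mulNormLineDeriv {g : E → E} (hF : Continuous F) (hg : Continuous g)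
    (hx : ContinuousOn x K) (hv : ContinuousOn v K) (hy : ContinuousOn y K)
    (hw : ContinuousOn w K) (hne : ∀ p ∈ s ×ˢ K, y p.2 + p.1 • w p.2 ≠ 0) :
    ContinuousOn (uncurry fun ε t => mulNormLineDeriv F g (x t) (v t) (y t) (w t) ε) (s ×ˢ K) := by
  have hxv := hx.uncurry_add_smul hv s
  have hyw := hy.uncurry_add_smul hw s
  have hv' : ContinuousOn (fun p : ℝ × X => v p.2) (s ×ˢ K) :=
    hv.comp continuousOn_snd fun _ hp => hp.2
  have hw' : ContinuousOn (fun p : ℝ × X => w p.2) (s ×ˢ K) :=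
    hw.comp continuousOn_snd fun _ hp => hp.2
  exact (((hg.comp_continuousOn hxv).inner hv').mul hyw.norm).add
    ((hF.comp_continuousOn hxv).mul
      ((hyw.inner hw').div hyw.norm fun p hp => norm_ne_zero_iff.2 (hne p hp)))

end ContinuousOn

end InnerProductSpace

theorem euler_lagrange_implies_stationary_general {d : ℕ}
    (F : EuclideanSpace ℝ (Fin d) → ℝ)
    (gradF : EuclideanSpace ℝ (Fin d) → EuclideanSpace ℝ (Fin d))
    (hgrad : ∀ x, HasGradientAt F (gradF x) x)
    (hgradc : Continuous gradF)
    (r r' r'' : ℝ → EuclideanSpace ℝ (Fin d))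
    (hr : ∀ t ∈ Icc (0:ℝ) 1, HasDerivAt r (r' t) t)
    (hr' : ∀ t ∈ Icc (0:ℝ) 1, HasDerivAt r' (r'' t) t)
    (hr'ne : ∀ t ∈ Icc (0:ℝ) 1, r' t ≠ 0)
    (τ' : ℝ → EuclideanSpace ℝ (Fin d))
    (hτ' : ∀ t ∈ Icc (0:ℝ) 1, HasDerivAt (fun u => ‖r' u‖⁻¹ • r' u) (τ' t) t)
    (hEL : ∀ t ∈ Icc (0:ℝ) 1,
      ‖r' t‖ • gradF (r t) =
        ⟪gradF (r t), r' t⟫ • (‖r' t‖⁻¹ • r' t) + F (r t) • τ' t) :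
    ∀ (δr δr' : ℝ → EuclideanSpace ℝ (Fin d)),
      (∀ t ∈ Icc (0:ℝ) 1, HasDerivAt δr (δr' t) t) →
      ContinuousOn δr' (Icc 0 1) →
      δr 0 = 0 → δr 1 = 0 →
      HasDerivAt
        (fun ε : ℝ => ∫ t in (0:ℝ)..1, F (r t + ε • δr t) * ‖r' t + ε • δr' t‖)
        0 0 := by
  intro δr δr' hδr hδr'c hδr0 hδr1
  rw [← uIcc_of_le zero_le_one] at hr hr' hr'ne hτ' hEL hδr hδr'c
  have hFc : Continuous F :=
    continuous_iff_continuousAt.2 fun x => (hgrad x).hasFDerivAt.continuousAt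
  have hrc := HasDerivAt.continuousOn hr
  have hr'c := HasDerivAt.continuousOn hr'
  have hδrc := HasDerivAt.continuousOn hδr
  obtain ⟨δ, hδ, hne⟩ := nhds_basis_closedBall.eventually_iff.1
    (isCompact_uIcc.eventually_forall_add_smul_ne_zero hr'c hδr'c hr'ne)
  have hL' := continuousOn_mulNormLineDeriv hFc hgradc hrc hδrc hr'c hδr'c
    fun p hp => hne hp.1 p.2 hp.2
  have hfirst : ∫ t in (0:ℝ)..1, mulNormLineDeriv F gradF (r t) (δr t) (r' t) (δr' t) 0 = 0 := by
    rw [intervalIntegral.integral_eq_sub_of_hasDerivAt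
      (fun t ht => hasDerivAt_mul_inner_unitTangent_of_eulerLagrange (hgrad _) (hr t ht)
        (hτ' t ht) (hδr t ht) (hEL t ht))
      (hL'.uncurry_left 0 (mem_closedBall_self hδ.le)).intervalIntegrable]
    simp [hδr0, hδr1]
  have hstat := intervalIntegral.hasDerivAt_integral_of_continuousOn_uncurry hδ
    (continuousOn_mul_norm_add_smul hFc hrc hδrc hr'c hδr'c) hL'
    fun ε hε t ht => hasDerivAt_mul_norm_add_smul (hgrad _) (hne (ball_subset_closedBall hε) t ht)
  rwa [hfirst] at hstat

/-- The Euler–Lagrange equation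
`∇F(r)‖r'‖ = ⟨∇F(r), r'⟩ τ + F(r) τ'` (with `τ = r'/‖r'‖`) implies stationarity
of the line-integral functional `E[r] = ∫₀¹ F(r(t))‖r'(t)‖ dt` with respect to
every `C¹` variation vanishing at the endpoints. -/
theorem euler_lagrange_implies_stationary {d : ℕ}
    (F : EuclideanSpace ℝ (Fin d) → ℝ)
    (gradF : EuclideanSpace ℝ (Fin d) → EuclideanSpace ℝ (Fin d))
    (hgrad : ∀ x, HasGradientAt F (gradF x) x)
    (hgradc : Continuous gradF)
    (r r' r'' : ℝ → EuclideanSpace ℝ (Fin d))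
    (hr : ∀ t ∈ Icc (0:ℝ) 1, HasDerivAt r (r' t) t)
    (hr' : ∀ t ∈ Icc (0:ℝ) 1, HasDerivAt r' (r'' t) t)
    (hr''c : ContinuousOn r'' (Icc 0 1))
    (hr'ne : ∀ t ∈ Icc (0:ℝ) 1, r' t ≠ 0)
    (τ' : ℝ → EuclideanSpace ℝ (Fin d))
    (hτ' : ∀ t ∈ Icc (0:ℝ) 1, HasDerivAt (fun u => ‖r' u‖⁻¹ • r' u) (τ' t) t)
    (hEL : ∀ t ∈ Icc (0:ℝ) 1,
      ‖r' t‖ • gradF (r t) =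
        ⟪gradF (r t), r' t⟫ • (‖r' t‖⁻¹ • r' t) + F (r t) • τ' t) :
    ∀ (δr δr' : ℝ → EuclideanSpace ℝ (Fin d)),
      (∀ t ∈ Icc (0:ℝ) 1, HasDerivAt δr (δr' t) t) →
      ContinuousOn δr' (Icc 0 1) →
      δr 0 = 0 → δr 1 = 0 →
      HasDerivAt
        (fun ε : ℝ => ∫ t in (0:ℝ)..1, F (r t + ε • δr t) * ‖r' t + ε • δr' t‖)
        0 0 :=
  euler_lagrange_implies_stationary_general F gradF hgrad hgradc r r' r'' hr hr' hr'ne τ' hτ' hEL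
end
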